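/- arXiv:2402.01014 — 8 statements merged into one kernel-verified Lean document; each statement's English description precedes it below -/
import Mathlib

section
/- Let a ∈ ℂ, let M = {(z,0) ∈ ℂ² : |z| < 1}, and let L = {(z, −z·conj(a)) : z ∈ ℂ, (1+|a|²)·|z|² < 1} be the complex line through the origin with polar vector (a,1,0) in the ball B = {(z₁,z₂) : |z₁|²+|z₂|² < 1}. Let Π_M(z₁,z₂) := (z₁,0) be the orthogonal projection onto M. Then Π_M(L) = {(z,0) : |z| < c} where c := 1/√(1+|a|²); that is, the projection of L onto M is the open hyperbolic disc centered at the origin of radius log((1+c)/(1−c)), where c = |cos θ| and θ is the angle of intersection of L and M (since cos²θ = N(L,M) = 1/(1+|a|²)). -/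
open Complex Real

theorem Real.mul_sq_lt_one_iff_lt_one_div_sqrt {c r : ℝ} (hc : 0 < c) (hr : 0 ≤ r) :
    c * r ^ 2 < 1 ↔ r < 1 / √c := by
  rw [lt_div_iff₀ (sqrt_pos.2 hc),
    ← pow_lt_one_iff_of_nonneg (mul_nonneg hr (sqrt_nonneg c)) two_ne_zero, mul_pow,
    sq_sqrt hc.le, mul_comm]

theorem Set.image_zero_snd_graph {α β : Type*} [Zero β] (P : α → Prop) (f : α → β) :
    (fun p : α × β => (p.1, (0 : β))) '' {p | ∃ z, P z ∧ p = (z, f z)}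
      = {p | ∃ z, p = (z, 0) ∧ P z} := by
  ext p
  constructor
  · rintro ⟨_, ⟨z, hz, rfl⟩, rfl⟩
    exact ⟨z, rfl, hz⟩
  · rintro ⟨z, rfl, hz⟩
    exact ⟨(z, f z), ⟨z, hz, rfl⟩, rfl⟩

/-- The orthogonal projection onto `M = {(z,0) : |z| < 1}` of the complex line `L`
through the origin with polar vector `(a,1,0)` is the open disc
`{(z,0) : |z| < 1/√(1+|a|²)}`. -/
theorem projection_of_intersecting_line_is_disc (a : ℂ)
    (L : Set (ℂ × ℂ))
    (hL : L = {p : ℂ × ℂ | ∃ z : ℂ,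
      (1 + ‖a‖ ^ 2) * ‖z‖ ^ 2 < 1 ∧
      p = (z, -z * (starRingEnd ℂ) a)}) :
    (fun p : ℂ × ℂ => (p.1, (0 : ℂ))) '' L
      = {p : ℂ × ℂ | ∃ z : ℂ, p = (z, 0) ∧
          ‖z‖ < 1 / Real.sqrt (1 + ‖a‖ ^ 2)} := by
  subst hL
  rw [Set.image_zero_snd_graph (fun z : ℂ => (1 + ‖a‖ ^ 2) * ‖z‖ ^ 2 < 1)]
  simp only [mul_sq_lt_one_iff_lt_one_div_sqrt (by positivity : (0 : ℝ) < 1 + ‖a‖ ^ 2)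
    (norm_nonneg _)]
end

section
/- Let 0 < x < 1, 0 < r < 1, and θ ∈ ℝ. Let n₂ := (1/x, 0, 1) and n₃ := (1/x, r·e^{iθ}/√(1−r²), 1/√(1−r²)) in ℂ³ (the polar vectors of the complex line L₂ at distance d from L₁ = {(0,w)}, where x = tanh(d/2), and of its image g(L₂) under the normalized loxodromic isometry g stabilizing L₁ with trivial holonomy translating the origin to r·e^{iθ}). Then |⟨n₂,n₃⟩|² < ⟨n₂,n₂⟩·⟨n₃,n₃⟩ (i.e., L₂ and g(L₂) intersect) if and only if r < 2√(1−x²)/(2−x²). -/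
open Complex Real

/-- The signature `(2,1)` Hermitian form on `ℂ³`. -/
noncomputable def herm (p q : ℂ × ℂ × ℂ) : ℂ :=
  p.1 * (starRingEnd ℂ) q.1 + p.2.1 * (starRingEnd ℂ) q.2.1 - p.2.2 * (starRingEnd ℂ) q.2.2

/-!
Both polar vectors have `⟨n, n⟩ = a - 1` with `a = 1/x²`, and `⟨n₂, n₃⟩ = a - b` is real with
`b = 1/√(1 - r²) > 1`. Since `(a - 1)² - (a - b)² = (b - 1)(2a - 1 - b)`, the lines meet iff
`b < 2/x² - 1`, i.e. `√(1 - r²) > c := x²/(2 - x²)`, i.e. `r < √(1 - c²) = 2√(1 - x²)/(2 - x²)`.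
-/

theorem herm_self (p : ℂ × ℂ × ℂ) :
    herm p p = ((‖p.1‖ ^ 2 + ‖p.2.1‖ ^ 2 - ‖p.2.2‖ ^ 2 : ℝ) : ℂ) := by
  simp only [herm, mul_conj, normSq_eq_norm_sq]
  push_cast; ring

theorem herm_ofReal_zero_one_ofReal (a c : ℝ) (z : ℂ) :
    herm ((a : ℂ), 0, 1) ((a : ℂ), z, (c : ℂ)) = ((a ^ 2 - c : ℝ) : ℂ) := by
  simp only [herm, conj_ofReal]
  push_cast; ring

theorem sq_sub_lt_sq_sub_one_iff {a b : ℝ} (hb : 1 < b) :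
    (a - b) ^ 2 < (a - 1) ^ 2 ↔ b < 2 * a - 1 := by
  have h : (a - 1) ^ 2 - (a - b) ^ 2 = (b - 1) * (2 * a - 1 - b) := by ring
  rw [← sub_pos, h, mul_pos_iff_of_pos_left (sub_pos.2 hb), sub_pos]

theorem sqrt_one_sub_sq_div_two_sub_sq {x : ℝ} (hx : x ^ 2 < 2) :
    √(1 - (x ^ 2 / (2 - x ^ 2)) ^ 2) = 2 * √(1 - x ^ 2) / (2 - x ^ 2) := by
  have h2 : 0 < 2 - x ^ 2 := by linarith
  have : 1 - (x ^ 2 / (2 - x ^ 2)) ^ 2 = (2 / (2 - x ^ 2)) ^ 2 * (1 - x ^ 2) := by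
    field_simp; ring
  rw [this, sqrt_mul (sq_nonneg _), sqrt_sq (by positivity)]
  ring

theorem one_div_sqrt_one_sub_sq_lt_iff {x r : ℝ} (hx0 : 0 < x) (hx1 : x < 1) (hr0 : 0 ≤ r)
    (hr1 : r < 1) :
    1 / √(1 - r ^ 2) < 2 * (1 / x) ^ 2 - 1 ↔ r < 2 * √(1 - x ^ 2) / (2 - x ^ 2) := by
  have h2 : 0 < 2 - x ^ 2 := by nlinarith
  set c := x ^ 2 / (2 - x ^ 2) with hc
  have hc0 : 0 < c := by positivity
  have hinv : 2 * (1 / x) ^ 2 - 1 = 1 / c := by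
    rw [hc]; field_simp
  rw [hinv, ← sqrt_one_sub_sq_div_two_sub_sq (by nlinarith), ← hc,
    one_div_lt_one_div (sqrt_pos.2 (by nlinarith)) hc0, lt_sqrt hc0.le, lt_sqrt hr0]
  constructor <;> intro h <;> linarith

/-- Trivial holonomy: the translate `g(L₂)` of the complex line `L₂` under a normalized
loxodromic with trivial holonomy meets `L₂` iff the translation radius `r` satisfies
`r < 2√(1−x²)/(2−x²)`. -/
theorem trivial_holonomy_intersection_criterion
    (x r θ : ℝ) (hx0 : 0 < x) (hx1 : x < 1) (hr0 : 0 < r) (hr1 : r < 1)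
    (n₂ n₃ : ℂ × ℂ × ℂ)
    (hn₂ : n₂ = (((1 / x : ℝ) : ℂ), 0, 1))
    (hn₃ : n₃ = (((1 / x : ℝ) : ℂ),
      (r : ℂ) * Complex.exp (θ * Complex.I) / ((Real.sqrt (1 - r ^ 2) : ℝ) : ℂ),
      1 / ((Real.sqrt (1 - r ^ 2) : ℝ) : ℂ))) :
    ‖herm n₂ n₃‖ ^ 2 < (herm n₂ n₂).re * (herm n₃ n₃).re ↔
      r < 2 * Real.sqrt (1 - x ^ 2) / (2 - x ^ 2) := by
  set s := √(1 - r ^ 2)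
  have hs : 0 < s := sqrt_pos.2 (by nlinarith)
  have hs2 : s ^ 2 = 1 - r ^ 2 := sq_sqrt (by nlinarith)
  have hw : (1 : ℂ) / (s : ℂ) = ((1 / s : ℝ) : ℂ) := by push_cast; rfl
  have h23 : herm n₂ n₃ = (((1 / x) ^ 2 - 1 / s : ℝ) : ℂ) := by
    rw [hn₂, hn₃, hw, herm_ofReal_zero_one_ofReal]
  have h22 : (herm n₂ n₂).re = (1 / x) ^ 2 - 1 := by
    simp only [hn₂, herm_self, ofReal_re, norm_real, Real.norm_eq_abs, sq_abs, norm_zero,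
      norm_one]
    ring
  have h33 : (herm n₃ n₃).re = (1 / x) ^ 2 - 1 := by
    simp only [hn₃, herm_self, ofReal_re, norm_div, norm_mul, norm_exp_ofReal_mul_I, norm_real,
      norm_one, Real.norm_eq_abs, sq_abs, div_pow, abs_of_pos hr0, abs_of_pos hs, hs2]
    field_simp [(by nlinarith : 1 - r ^ 2 ≠ 0)]
    ring
  have hb : 1 < 1 / s := by
    rw [lt_one_div one_pos hs, div_one]
    exact (sqrt_lt' one_pos).2 (by nlinarith)
  rw [h23, h22, h33, norm_real, Real.norm_eq_abs, sq_abs, ← sq,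
    sq_sub_lt_sq_sub_one_iff hb, one_div_sqrt_one_sub_sq_lt_iff hx0 hx1 hr0.le hr1]
end

section
/- Let 0 < x < 1, 0 ≤ r < 1, θ ∈ ℝ, ψ ∈ ℝ, and let n₂ := (1/x, 0, 1) and n₃ := (e^{2ψi/3}/x, r·e^{iθ}·e^{−ψi/3}/√(1−r²), e^{−ψi/3}/√(1−r²)) in ℂ³. Then |⟨n₂,n₃⟩|² / (1/x² − 1)² = ((1−r²) − 2x²·√(1−r²)·cos ψ + x⁴) / ((1−x²)²·(1−r²)). (This quantity is N(L₂, g(L₂)), where g is the normalized loxodromic isometry with holonomy ψ translating the origin to r·e^{iθ}, and equals cosh²(ρ(L₂, g(L₂))/2) when it exceeds 1.) -/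
open Complex Real

/-! Since `n₂` has vanishing middle coordinate,
`⟨n₂, n₃⟩ = e^{-2ψi/3} (1/x² - e^{ψi}/√(1-r²))`; the unimodular factor drops out of the norm,
and the law of cosines turns the square of the remaining norm into the numerator. -/

theorem Complex.sq_norm_ofReal_sub_mul_exp_mul_I (a b ψ : ℝ) :
    ‖(a : ℂ) - b * exp (ψ * I)‖ ^ 2 = a ^ 2 - 2 * a * b * Real.cos ψ + b ^ 2 := by
  rw [Complex.sq_norm, normSq_apply]
  simp only [sub_re, sub_im, ofReal_re, ofReal_im, re_ofReal_mul, im_ofReal_mul,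
    exp_ofReal_mul_I_re, exp_ofReal_mul_I_im]
  linear_combination b ^ 2 * Real.sin_sq_add_cos_sq ψ

theorem herm_eq_exp_mul_sub (x s ψ : ℝ) (v : ℂ) :
    herm (((1 / x : ℝ) : ℂ), 0, 1)
        (exp (2 * ψ * I / 3) / (x : ℂ), v, exp (-(ψ * I) / 3) / (s : ℂ))
      = exp ((-(2 * ψ / 3) : ℝ) * I) * (((1 / x ^ 2 : ℝ) : ℂ) - (1 / s : ℝ) * exp (ψ * I)) := by
  simp only [herm, map_div₀, ← exp_conj, map_mul, map_ofNat, map_neg, conj_I, conj_ofReal]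
  rw [mul_sub, mul_left_comm _ _ (Complex.exp _), ← Complex.exp_add]
  push_cast
  ring_nf

/-- The quantity `N(L₂, g(L₂))` for the normalized loxodromic with holonomy `ψ`
translating the origin to `r·e^{iθ}`. -/
theorem N_formula_for_holonomy
    (x r θ ψ : ℝ) (hx0 : 0 < x) (hx1 : x < 1) (hr0 : 0 ≤ r) (hr1 : r < 1)
    (n₂ n₃ : ℂ × ℂ × ℂ)
    (hn₂ : n₂ = (((1 / x : ℝ) : ℂ), 0, 1))
    (hn₃ : n₃ = (Complex.exp (2 * ψ * Complex.I / 3) / (x : ℂ),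
      (r : ℂ) * Complex.exp (θ * Complex.I) * Complex.exp (-(ψ * Complex.I) / 3) /
        ((Real.sqrt (1 - r ^ 2) : ℝ) : ℂ),
      Complex.exp (-(ψ * Complex.I) / 3) / ((Real.sqrt (1 - r ^ 2) : ℝ) : ℂ))) :
    ‖herm n₂ n₃‖ ^ 2 / (1 / x ^ 2 - 1) ^ 2
      = ((1 - r ^ 2) - 2 * x ^ 2 * Real.sqrt (1 - r ^ 2) * Real.cos ψ + x ^ 4) /
        ((1 - x ^ 2) ^ 2 * (1 - r ^ 2)) := by
  subst hn₂ hn₃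
  set s := Real.sqrt (1 - r ^ 2)
  have hr : 0 < 1 - r ^ 2 := by nlinarith
  have hs : 0 < s := Real.sqrt_pos.2 hr
  have hs2 : s ^ 2 = 1 - r ^ 2 := Real.sq_sqrt hr.le
  have hx2 : 1 - x ^ 2 ≠ 0 := by nlinarith
  rw [herm_eq_exp_mul_sub, norm_mul, mul_pow, norm_exp_ofReal_mul_I, one_pow, one_mul,
    sq_norm_ofReal_sub_mul_exp_mul_I, ← hs2]
  field_simp
end

section
/- Let R be a measurable subset of the open unit disc {z ∈ ℂ : |z| < 1}, let ε > 0, and let G := {(z₁,z₂) ∈ ℂ² : z₂ ∈ R, |z₁| ≤ √(1−|z₂|²)·tanh(ε/2)}. Then, as an equality of Lebesgue integrals (with values in [0,∞]), ∫_G 16/(1 − |z₁|² − |z₂|²)³ d(z₁,z₂) = 2π·(cosh⁴(ε/2) − 1) · ∫_R 4/(1−|z|²)² dz. In words: the complex hyperbolic volume of the tubular neighborhood of width ε of a region R in a complex line equals 2π(cosh⁴(ε/2) − 1) times the hyperbolic area of R. -/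
/-!
By Tonelli, integrate first over the fibres of the projection onto `L`. Over `z₂` the fibre is
the Euclidean disc of radius `ρ = √a · tanh(ε/2)`, `a = 1 - |z₂|²`, on which the density
`16 / (a - |z₁|²)³` is radial. In polar coordinates `r · 16 / (a - r²)³` has the antiderivative
`4 / (a - r²)²`, so the fibre contributes `2π (4 / (a - ρ²)² - 4 / a²)`;
as `a - ρ² = a / cosh²(ε/2)` this is `2π (cosh⁴(ε/2) - 1)` times the area density `4 / a²` of `L`.
-/

open Complex Real MeasureTheory ENNReal Set Metric

theorem lintegral_Ioo_ofReal_eq_sub_of_hasDerivAt {g g' : ℝ → ℝ} {a b : ℝ} (hab : a ≤ b)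
    (hcont : ContinuousOn g (Icc a b)) (hderiv : ∀ x ∈ Ioo a b, HasDerivAt g (g' x) x)
    (hpos : ∀ x ∈ Ioo a b, 0 ≤ g' x) :
    ∫⁻ x in Ioo a b, ENNReal.ofReal (g' x) = ENNReal.ofReal (g b - g a) := by
  have hint := intervalIntegral.integrableOn_deriv_of_nonneg hcont hderiv hpos
  rw [← ofReal_integral_eq_lintegral_ofReal (hint.mono_set Ioo_subset_Ioc_self)
    (ae_restrict_of_forall_mem measurableSet_Ioo hpos), ← integral_Ioc_eq_integral_Ioo,
    ← intervalIntegral.integral_of_le hab,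
    intervalIntegral.integral_eq_sub_of_hasDerivAt_of_le hab hcont hderiv
      ((intervalIntegrable_iff_integrableOn_Ioc_of_le hab).2 hint)]

theorem Complex.lintegral_comp_norm {f : ℝ → ℝ≥0∞} (hf : Measurable f) :
    ∫⁻ z : ℂ, f ‖z‖ = ENNReal.ofReal (2 * π) * ∫⁻ r in Ioi 0, ENNReal.ofReal r * f r := by
  calc ∫⁻ z : ℂ, f ‖z‖
      = ∫⁻ p in Ioi 0 ×ˢ Ioo (-π) π, ENNReal.ofReal p.1 * f p.1 := by
        rw [← Complex.lintegral_comp_polarCoord_symm]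
        refine setLIntegral_congr_fun polarCoord.open_target.measurableSet fun p hp => ?_
        rw [norm_polarCoord_symm, abs_of_pos (show 0 < p.1 from hp.1), smul_eq_mul]
    _ = ENNReal.ofReal (2 * π) * ∫⁻ r in Ioi 0, ENNReal.ofReal r * f r := by
        rw [Measure.volume_eq_prod, ← Measure.prod_restrict,
          lintegral_prod _ (by fun_prop)]
        simp only [lintegral_const, Measure.restrict_apply_univ, Real.volume_Ioo]
        rw [lintegral_mul_const _ (by fun_prop), mul_comm]
        ring_nf

theorem Complex.lintegral_closedBall_comp_norm {f : ℝ → ℝ≥0∞} (hf : Measurable f) (ρ : ℝ) :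
    ∫⁻ z in closedBall (0 : ℂ) ρ, f ‖z‖ =
      ENNReal.ofReal (2 * π) * ∫⁻ r in Ioc 0 ρ, ENNReal.ofReal r * f r := by
  have hind (z : ℂ) :
      (closedBall 0 ρ).indicator (fun z => f ‖z‖) z = (Iic ρ).indicator f ‖z‖ := by
    simp [indicator]
  rw [← lintegral_indicator measurableSet_closedBall, funext hind,
    Complex.lintegral_comp_norm (hf.indicator measurableSet_Iic), ← Ioi_inter_Iic, inter_comm,
    ← Measure.restrict_restrict measurableSet_Iic, ← lintegral_indicator measurableSet_Iic]
  congr 2 with r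
  simp only [indicator]
  split_ifs <;> simp

theorem Real.tanh_nonneg {x : ℝ} (hx : 0 ≤ x) : 0 ≤ tanh x := by
  rw [tanh_eq_sinh_div_cosh]
  exact div_nonneg (sinh_nonneg_iff.2 hx) (cosh_pos x).le

theorem Real.one_sub_tanh_sq (x : ℝ) : 1 - tanh x ^ 2 = (cosh x ^ 2)⁻¹ := by
  have := cosh_sq_sub_sinh_sq x
  have := (cosh_pos x).ne'
  rw [tanh_eq_sinh_div_cosh]
  field_simp
  linarith

theorem hasDerivAt_four_div_sub_sq_sq {a r : ℝ} (hne : a - r ^ 2 ≠ 0) :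
    HasDerivAt (fun r => 4 / (a - r ^ 2) ^ 2) (r * (16 / (a - r ^ 2) ^ 3)) r := by
  refine ((hasDerivAt_const r (4 : ℝ)).fun_div (((hasDerivAt_pow 2 r).const_sub a).fun_pow 2)
    (pow_ne_zero 2 hne)).congr_deriv ?_
  field_simp
  ring

theorem lintegral_closedBall_sixteen_div_sub_norm_sq_pow_three {a ρ : ℝ} (hρ : 0 ≤ ρ)
    (hρa : ρ ^ 2 < a) :
    ∫⁻ z in closedBall (0 : ℂ) ρ, ENNReal.ofReal (16 / (a - ‖z‖ ^ 2) ^ 3) =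
      ENNReal.ofReal (2 * π) * ENNReal.ofReal (4 / (a - ρ ^ 2) ^ 2 - 4 / a ^ 2) := by
  have hpos : ∀ r ∈ Icc 0 ρ, 0 < a - r ^ 2 := fun r hr => by
    nlinarith [pow_le_pow_left₀ hr.1 hr.2 2]
  rw [Complex.lintegral_closedBall_comp_norm
      (f := fun r => ENNReal.ofReal (16 / (a - r ^ 2) ^ 3)) (by fun_prop) ρ,
    Measure.restrict_congr_set Ioo_ae_eq_Ioc.symm]
  congr 1
  calc ∫⁻ r in Ioo 0 ρ, ENNReal.ofReal r * ENNReal.ofReal (16 / (a - r ^ 2) ^ 3)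
      = ∫⁻ r in Ioo 0 ρ, ENNReal.ofReal (r * (16 / (a - r ^ 2) ^ 3)) :=
        setLIntegral_congr_fun measurableSet_Ioo fun r hr => (ofReal_mul hr.1.le).symm
    _ = ENNReal.ofReal (4 / (a - ρ ^ 2) ^ 2 - 4 / (a - 0 ^ 2) ^ 2) := by
        refine lintegral_Ioo_ofReal_eq_sub_of_hasDerivAt hρ (fun r hr => ?_)
          (fun r hr => hasDerivAt_four_div_sub_sq_sq (hpos r (Ioo_subset_Icc_self hr)).ne')
          (fun r hr => ?_)
        · exact (hasDerivAt_four_div_sub_sq_sq (hpos r hr).ne').continuousAt.continuousWithinAt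
        · have := hpos r (Ioo_subset_Icc_self hr)
          exact mul_nonneg hr.1.le (by positivity)
    _ = _ := by norm_num

theorem lintegral_closedBall_sqrt_mul_tanh {a s : ℝ} (ha : 0 < a) (hs : 0 ≤ s) :
    ∫⁻ z in closedBall (0 : ℂ) (√a * Real.tanh s), ENNReal.ofReal (16 / (a - ‖z‖ ^ 2) ^ 3) =
      ENNReal.ofReal (2 * π * (Real.cosh s ^ 4 - 1)) * ENNReal.ofReal (4 / a ^ 2) := by
  have hρ2 : (√a * Real.tanh s) ^ 2 = a * Real.tanh s ^ 2 := by rw [mul_pow, sq_sqrt ha.le]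
  rw [lintegral_closedBall_sixteen_div_sub_norm_sq_pow_three
      (mul_nonneg (sqrt_nonneg a) (Real.tanh_nonneg hs)) (by nlinarith [Real.tanh_sq_lt_one s]),
    ← ofReal_mul (by positivity),
    ← ofReal_mul (mul_nonneg (by positivity) (sub_nonneg.2 (one_le_pow₀ (one_le_cosh s)))),
    hρ2, ← mul_one_sub, Real.one_sub_tanh_sq]
  congr 1
  have := (Real.cosh_pos s).ne'
  field_simp

theorem setLIntegral_prod_setOf_norm_fst_le {E F : Type*} [NormedAddCommGroup E]
    [MeasurableSpace E] [OpensMeasurableSpace E] [MeasurableSpace F] {μ : Measure E}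
    {ν : Measure F} [SFinite μ] [SFinite ν] {R : Set F} (hR : MeasurableSet R) {r : F → ℝ}
    (hr : Measurable r) {f : E × F → ℝ≥0∞} (hf : Measurable f) :
    ∫⁻ p in {p : E × F | p.2 ∈ R ∧ ‖p.1‖ ≤ r p.2}, f p ∂μ.prod ν =
      ∫⁻ y in R, ∫⁻ x in closedBall 0 (r y), f (x, y) ∂μ ∂ν := by
  have hG : MeasurableSet {p : E × F | p.2 ∈ R ∧ ‖p.1‖ ≤ r p.2} :=
    (measurable_snd hR).inter (measurableSet_le measurable_fst.norm (hr.comp measurable_snd))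
  rw [← lintegral_indicator hG, lintegral_prod_symm' _ (hf.indicator hG),
    ← lintegral_indicator hR]
  congr 1 with y
  by_cases hy : y ∈ R
  · rw [indicator_of_mem hy, ← lintegral_indicator measurableSet_closedBall]
    congr 1 with x
    simp [indicator, hy]
  · simp [indicator, hy]

/-- The complex hyperbolic volume of the tubular neighborhood of width `ε` of a region
`R` in a complex line equals `2π(cosh⁴(ε/2) − 1)` times the hyperbolic area of `R`. -/
theorem volume_of_tubular_neighborhood
    (R : Set ℂ) (hR : MeasurableSet R) (hR1 : R ⊆ {z : ℂ | ‖z‖ < 1})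
    (ε : ℝ) (hε : 0 < ε)
    (G : Set (ℂ × ℂ))
    (hG : G = {p : ℂ × ℂ | p.2 ∈ R ∧
      ‖p.1‖ ≤ Real.sqrt (1 - ‖p.2‖ ^ 2) * Real.tanh (ε / 2)}) :
    ∫⁻ p in G, ENNReal.ofReal
        (16 / (1 - ‖p.1‖ ^ 2 - ‖p.2‖ ^ 2) ^ 3) ∂volume
      = ENNReal.ofReal (2 * Real.pi * (Real.cosh (ε / 2) ^ 4 - 1)) *
        ∫⁻ z in R, ENNReal.ofReal (4 / (1 - ‖z‖ ^ 2) ^ 2) ∂volume := by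
  subst hG
  rw [Measure.volume_eq_prod, setLIntegral_prod_setOf_norm_fst_le hR
      (r := fun y => √(1 - ‖y‖ ^ 2) * Real.tanh (ε / 2)) (by fun_prop) (by fun_prop),
    ← lintegral_const_mul' _ _ ofReal_ne_top]
  refine setLIntegral_congr_fun hR fun y hy => ?_
  have hy1 : 0 < 1 - ‖y‖ ^ 2 := sub_pos.2 (pow_lt_one₀ (norm_nonneg y) (hR1 hy) two_ne_zero)
  simp_rw [sub_right_comm (1 : ℝ) _ (‖y‖ ^ 2)]
  exact lintegral_closedBall_sqrt_mul_tanh hy1 (half_pos hε).le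
end

section
/- Let D be a measurable subset of the open unit disc {z ∈ ℂ : |z| < 1}, let ε > 0 and ψ ∈ (0, 2π], and let W := {(z₁,z₂) ∈ ℂ² : z₂ ∈ D, 0 < |z₁| ≤ √(1−|z₂|²)·tanh(ε/2), |Arg z₁| ≤ ψ/2} (the wedge of width ε and sector angle ψ anchored at D). Then, as an equality of Lebesgue integrals (with values in [0,∞]), ∫_W 16/(1 − |z₁|² − |z₂|²)³ d(z₁,z₂) = ψ·(cosh⁴(ε/2) − 1) · ∫_D 4/(1−|z|²)² dz. In words: the complex hyperbolic volume of the wedge anchored at D equals ψ(cosh⁴(ε/2) − 1) times the hyperbolic area of D. -/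
/-!
By Tonelli over the projection to `L`, the volume of the wedge is the integral over `D` of the
volumes of its fibres, each a sector of a disc of radius `R = √b · tanh (ε/2)`, `b = 1 − |z₂|²`,
in the orthogonal complex line. In polar coordinates a fibre has volume
`ψ ∫₀^R 16 r / (b − r²)³ dr = ψ (4 / (b − R²)² − 4 / b²)`, and since `b − R² = b / cosh² (ε/2)`
this is `ψ (cosh⁴ (ε/2) − 1) · 4 / b²`, the constant times the area density of `L` at `z₂`.
-/

open Complex Real MeasureTheory ENNReal Set

theorem Real.volume_Ioo_inter_Icc {a b c d : ℝ} (hac : a ≤ c) (hdb : d ≤ b) :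
    volume (Ioo a b ∩ Icc c d) = ENNReal.ofReal (d - c) := by
  refine le_antisymm ?_ ?_
  · exact (measure_mono inter_subset_right).trans Real.volume_Icc.le
  · rw [← Real.volume_Ioo]
    exact measure_mono fun x hx ↦
      ⟨⟨hac.trans_lt hx.1, hx.2.trans_le hdb⟩, hx.1.le, hx.2.le⟩

theorem lintegral_Ioc_eq_ofReal_sub_of_hasDerivAt {F f : ℝ → ℝ} {a b : ℝ} (hab : a ≤ b)
    (hF : ∀ x ∈ Icc a b, HasDerivAt F (f x) x) (hf : ContinuousOn f (Icc a b))
    (hf₀ : ∀ x ∈ Ioc a b, 0 ≤ f x) :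
    ∫⁻ x in Ioc a b, ENNReal.ofReal (f x) = ENNReal.ofReal (F b - F a) := by
  have hint : IntegrableOn f (Ioc a b) :=
    (hf.integrableOn_compact isCompact_Icc).mono_set Ioc_subset_Icc_self
  rw [← ofReal_integral_eq_lintegral_ofReal hint
      ((ae_restrict_iff' measurableSet_Ioc).mpr (.of_forall hf₀)),
    ← intervalIntegral.integral_of_le hab,
    intervalIntegral.integral_eq_sub_of_hasDerivAt (fun x hx ↦ hF x (uIcc_of_le hab ▸ hx))
      ((intervalIntegrable_iff_integrableOn_Ioc_of_le hab).mpr hint)]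

namespace Complex

def sector (R ψ : ℝ) : Set ℂ := {z | 0 < ‖z‖ ∧ ‖z‖ ≤ R ∧ |arg z| ≤ ψ / 2}

theorem measurableSet_setOf_mem_sector {α : Type*} [MeasurableSpace α] {f : α → ℂ} {R : α → ℝ}
    (hf : Measurable f) (hR : Measurable R) (ψ : ℝ) :
    MeasurableSet {x | f x ∈ sector (R x) ψ} := by
  simp only [sector, ofPred_and]
  exact (measurableSet_lt measurable_const hf.norm).inter
    ((measurableSet_le hf.norm hR).inter
      (measurableSet_le (measurable_arg.comp hf).abs measurable_const))

theorem polarCoord_symm_mem_sector_iff {p : ℝ × ℝ} (hp : p ∈ polarCoord.target) {R ψ : ℝ} :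
    Complex.polarCoord.symm p ∈ sector R ψ ↔ p ∈ Ioc 0 R ×ˢ Icc (-(ψ / 2)) (ψ / 2) := by
  have hpolar := Complex.polarCoord.right_inv hp
  rw [Complex.polarCoord_apply] at hpolar
  obtain ⟨hnorm, harg⟩ : _ ∧ _ := Prod.ext_iff.mp hpolar
  dsimp only at hnorm harg
  simp only [sector, mem_ofPred_eq, mem_prod, mem_Ioc, mem_Icc, ← abs_le, hnorm, harg, and_assoc]

theorem measurableSet_sector (R ψ : ℝ) : MeasurableSet (sector R ψ) :=
  measurableSet_setOf_mem_sector measurable_id measurable_const ψ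

theorem lintegral_sector_comp_norm {g : ℝ → ℝ≥0∞} (hg : Measurable g) (R : ℝ) {ψ : ℝ}
    (hψ : ψ ≤ 2 * π) :
    ∫⁻ z in sector R ψ, g ‖z‖ = ENNReal.ofReal ψ * ∫⁻ r in Ioc 0 R, ENNReal.ofReal r * g r := by
  have hcut : Ioc 0 R ×ˢ Icc (-(ψ / 2)) (ψ / 2) ∩ polarCoord.target =
      Ioc 0 R ×ˢ (Ioo (-π) π ∩ Icc (-(ψ / 2)) (ψ / 2)) := by
    rw [polarCoord_target, prod_inter_prod, inter_eq_left.mpr Ioc_subset_Ioi_self, inter_comm]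
  have hangle : volume (Ioo (-π) π ∩ Icc (-(ψ / 2)) (ψ / 2)) = ENNReal.ofReal ψ := by
    rw [Real.volume_Ioo_inter_Icc (by linarith) (by linarith), sub_neg_eq_add, add_halves]
  calc ∫⁻ z in sector R ψ, g ‖z‖
      = ∫⁻ p in polarCoord.target, ENNReal.ofReal p.1 •
          (sector R ψ).indicator (fun z ↦ g ‖z‖) (Complex.polarCoord.symm p) := by
        rw [← lintegral_indicator (measurableSet_sector R ψ),
          Complex.lintegral_comp_polarCoord_symm]
    _ = ∫⁻ p in polarCoord.target, (Ioc 0 R ×ˢ Icc (-(ψ / 2)) (ψ / 2)).indicator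
          (fun p ↦ ENNReal.ofReal p.1 * g p.1) p := by
        refine setLIntegral_congr_fun polarCoord.open_target.measurableSet fun p hp ↦ ?_
        by_cases h : p ∈ Ioc 0 R ×ˢ Icc (-(ψ / 2)) (ψ / 2)
        · rw [indicator_of_mem h, indicator_of_mem ((polarCoord_symm_mem_sector_iff hp).mpr h),
            norm_polarCoord_symm, abs_of_pos (mem_Ioi.mp hp.1), smul_eq_mul]
        · rw [indicator_of_notMem h,
            indicator_of_notMem (mt (polarCoord_symm_mem_sector_iff hp).mp h), smul_zero]
    _ = ∫⁻ p in Ioc 0 R ×ˢ (Ioo (-π) π ∩ Icc (-(ψ / 2)) (ψ / 2)),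
          ENNReal.ofReal p.1 * g p.1 := by
        rw [lintegral_indicator (measurableSet_Ioc.prod measurableSet_Icc),
          Measure.restrict_restrict (measurableSet_Ioc.prod measurableSet_Icc), hcut]
    _ = ENNReal.ofReal ψ * ∫⁻ r in Ioc 0 R, ENNReal.ofReal r * g r := by
        rw [Measure.volume_eq_prod,
          setLIntegral_prod (fun p : ℝ × ℝ ↦ ENNReal.ofReal p.1 * g p.1) (by fun_prop)]
        simp only [lintegral_const, Measure.restrict_apply_univ, hangle]
        rw [lintegral_mul_const' _ _ ENNReal.ofReal_ne_top, mul_comm]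

end Complex

theorem lintegral_Ioc_ofReal_mul_sixteen_div_sub_sq_pow_three {b R : ℝ} (hR : 0 ≤ R)
    (hRb : R ^ 2 < b) :
    ∫⁻ r in Ioc 0 R, ENNReal.ofReal r * ENNReal.ofReal (16 / (b - r ^ 2) ^ 3)
      = ENNReal.ofReal (4 / (b - R ^ 2) ^ 2 - 4 / b ^ 2) := by
  have hpos : ∀ r ∈ Icc 0 R, 0 < b - r ^ 2 := fun r hr ↦ by nlinarith [hr.1, hr.2]
  have hderiv : ∀ r ∈ Icc 0 R,
      HasDerivAt (fun r ↦ 4 / (b - r ^ 2) ^ 2) (r * (16 / (b - r ^ 2) ^ 3)) r := fun r hr ↦ by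
    have hne := (hpos r hr).ne'
    refine ((hasDerivAt_const r (4 : ℝ)).div (((hasDerivAt_pow 2 r).const_sub b).pow 2)
      (pow_ne_zero 2 hne)).congr_deriv ?_
    simp only [Pi.pow_apply]
    field_simp
    ring
  have hcont : ContinuousOn (fun r ↦ r * (16 / (b - r ^ 2) ^ 3)) (Icc 0 R) :=
    continuousOn_id.mul (continuousOn_const.div (by fun_prop)
      fun r hr ↦ pow_ne_zero 3 (hpos r hr).ne')
  calc ∫⁻ r in Ioc 0 R, ENNReal.ofReal r * ENNReal.ofReal (16 / (b - r ^ 2) ^ 3)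
      = ∫⁻ r in Ioc 0 R, ENNReal.ofReal (r * (16 / (b - r ^ 2) ^ 3)) :=
        setLIntegral_congr_fun measurableSet_Ioc fun r hr ↦ (ENNReal.ofReal_mul hr.1.le).symm
    _ = ENNReal.ofReal (4 / (b - R ^ 2) ^ 2 - 4 / (b - 0 ^ 2) ^ 2) :=
        lintegral_Ioc_eq_ofReal_sub_of_hasDerivAt hR hderiv hcont fun r hr ↦
          mul_nonneg hr.1.le (div_nonneg (by norm_num)
            (pow_nonneg (hpos r (Ioc_subset_Icc_self hr)).le 3))
    _ = ENNReal.ofReal (4 / (b - R ^ 2) ^ 2 - 4 / b ^ 2) := by norm_num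

theorem Real.four_div_sub_mul_tanh_sq (b x : ℝ) (hb : 0 < b) :
    4 / (b - b * tanh x ^ 2) ^ 2 - 4 / b ^ 2 = (cosh x ^ 4 - 1) * (4 / b ^ 2) := by
  have hcosh := (cosh_pos x).ne'
  have hsub : b - b * tanh x ^ 2 = b / cosh x ^ 2 := by
    rw [tanh_eq_sinh_div_cosh]
    field_simp
    linear_combination cosh_sq x
  rw [hsub]
  field_simp

theorem lintegral_sector_sqrt_mul_tanh {c ε ψ : ℝ} (hc : c < 1) (hε : 0 ≤ ε) (hψ : ψ ≤ 2 * π) :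
    ∫⁻ z in sector (√(1 - c) * Real.tanh (ε / 2)) ψ,
        ENNReal.ofReal (16 / (1 - ‖z‖ ^ 2 - c) ^ 3)
      = ENNReal.ofReal (ψ * (Real.cosh (ε / 2) ^ 4 - 1)) * ENNReal.ofReal (4 / (1 - c) ^ 2) := by
  have hb : 0 < 1 - c := by linarith
  have htanh : 0 ≤ Real.tanh (ε / 2) := by
    rw [Real.tanh_eq_sinh_div_cosh]
    exact div_nonneg (Real.sinh_nonneg_iff.mpr (by linarith)) (Real.cosh_pos _).le
  have hR2 : (√(1 - c) * Real.tanh (ε / 2)) ^ 2 = (1 - c) * Real.tanh (ε / 2) ^ 2 := by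
    rw [mul_pow, sq_sqrt hb.le]
  have hRb : (√(1 - c) * Real.tanh (ε / 2)) ^ 2 < 1 - c := by
    rw [hR2]
    nlinarith [Real.tanh_sq_lt_one (ε / 2)]
  have hcosh : 0 ≤ Real.cosh (ε / 2) ^ 4 - 1 :=
    sub_nonneg.mpr (one_le_pow₀ (Real.one_le_cosh _))
  calc ∫⁻ z in sector (√(1 - c) * Real.tanh (ε / 2)) ψ,
        ENNReal.ofReal (16 / (1 - ‖z‖ ^ 2 - c) ^ 3)
      = ∫⁻ z in sector (√(1 - c) * Real.tanh (ε / 2)) ψ,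
          ENNReal.ofReal (16 / ((1 - c) - ‖z‖ ^ 2) ^ 3) := by
        simp only [sub_right_comm (1 : ℝ)]
    _ = ENNReal.ofReal ψ * ∫⁻ r in Ioc 0 (√(1 - c) * Real.tanh (ε / 2)),
          ENNReal.ofReal r * ENNReal.ofReal (16 / ((1 - c) - r ^ 2) ^ 3) :=
        lintegral_sector_comp_norm
          (g := fun r ↦ ENNReal.ofReal (16 / ((1 - c) - r ^ 2) ^ 3)) (by fun_prop) _ hψ
    _ = ENNReal.ofReal ψ * ENNReal.ofReal ((Real.cosh (ε / 2) ^ 4 - 1) * (4 / (1 - c) ^ 2)) := by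
        rw [lintegral_Ioc_ofReal_mul_sixteen_div_sub_sq_pow_three (by positivity) hRb, hR2,
          Real.four_div_sub_mul_tanh_sq _ _ hb]
    _ = ENNReal.ofReal (ψ * (Real.cosh (ε / 2) ^ 4 - 1)) * ENNReal.ofReal (4 / (1 - c) ^ 2) := by
        rw [← ENNReal.ofReal_mul' (by positivity), ← ENNReal.ofReal_mul' (by positivity),
          mul_assoc]

theorem setLIntegral_setOf_snd_mem_and_fst_mem {α β : Type*} [MeasurableSpace α]
    [MeasurableSpace β] {μ : Measure α} {ν : Measure β} [SFinite μ] [SFinite ν]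
    {f : α × β → ℝ≥0∞} (hf : Measurable f) {D : Set β} (hD : MeasurableSet D) {S : β → Set α}
    (hDS : MeasurableSet {p : α × β | p.2 ∈ D ∧ p.1 ∈ S p.2}) :
    ∫⁻ p in {p : α × β | p.2 ∈ D ∧ p.1 ∈ S p.2}, f p ∂μ.prod ν
      = ∫⁻ y in D, ∫⁻ x in S y, f (x, y) ∂μ ∂ν := by
  rw [← lintegral_indicator hDS, lintegral_prod_symm' _ (hf.indicator hDS),
    ← lintegral_indicator hD]
  refine lintegral_congr fun y ↦ ?_
  simp_rw [← indicator_comp_right (fun x ↦ (x, y))]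
  rw [lintegral_indicator (measurable_prodMk_right hDS)]
  by_cases hy : y ∈ D
  · have hslice : (fun x ↦ (x, y)) ⁻¹' {p : α × β | p.2 ∈ D ∧ p.1 ∈ S p.2} = S y := by
      ext x
      simp [hy]
    rw [indicator_of_mem hy, hslice]
    rfl
  · have hslice : (fun x ↦ (x, y)) ⁻¹' {p : α × β | p.2 ∈ D ∧ p.1 ∈ S p.2} = ∅ := by
      ext x
      simp [hy]
    rw [indicator_of_notMem hy, hslice, Measure.restrict_empty, lintegral_zero_measure]

theorem volume_of_wedge_general
    (D : Set ℂ) (hD : MeasurableSet D) (hD1 : D ⊆ {z : ℂ | ‖z‖ < 1})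
    (ε ψ : ℝ) (hε : 0 < ε) (hψ1 : ψ ≤ 2 * Real.pi)
    (W : Set (ℂ × ℂ))
    (hW : W = {p : ℂ × ℂ | p.2 ∈ D ∧ 0 < ‖p.1‖ ∧
      ‖p.1‖ ≤ Real.sqrt (1 - ‖p.2‖ ^ 2) * Real.tanh (ε / 2) ∧
      |Complex.arg p.1| ≤ ψ / 2}) :
    ∫⁻ p in W, ENNReal.ofReal
        (16 / (1 - ‖p.1‖ ^ 2 - ‖p.2‖ ^ 2) ^ 3) ∂volume
      = ENNReal.ofReal (ψ * (Real.cosh (ε / 2) ^ 4 - 1)) *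
        ∫⁻ z in D, ENNReal.ofReal (4 / (1 - ‖z‖ ^ 2) ^ 2) ∂volume := by
  have hW_sector : W = {p : ℂ × ℂ | p.2 ∈ D ∧
      p.1 ∈ sector (√(1 - ‖p.2‖ ^ 2) * Real.tanh (ε / 2)) ψ} := hW
  have hW_meas : MeasurableSet W := hW_sector ▸ (measurable_snd hD).inter
    (measurableSet_setOf_mem_sector measurable_fst (by fun_prop) ψ)
  subst hW_sector
  rw [Measure.volume_eq_prod, setLIntegral_setOf_snd_mem_and_fst_mem (by fun_prop) hD hW_meas
      (S := fun z ↦ sector (√(1 - ‖z‖ ^ 2) * Real.tanh (ε / 2)) ψ),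
    ← lintegral_const_mul' _ _ ENNReal.ofReal_ne_top]
  exact setLIntegral_congr_fun hD fun z hz ↦ lintegral_sector_sqrt_mul_tanh
    (pow_lt_one₀ (norm_nonneg z) (hD1 hz) two_ne_zero) hε.le hψ1

/-- The complex hyperbolic volume of the wedge of width `ε` and sector angle `ψ`
anchored at a region `D` in a complex line equals `ψ(cosh⁴(ε/2) − 1)` times the
hyperbolic area of `D`. -/
theorem volume_of_wedge
    (D : Set ℂ) (hD : MeasurableSet D) (hD1 : D ⊆ {z : ℂ | ‖z‖ < 1})
    (ε ψ : ℝ) (hε : 0 < ε) (hψ0 : 0 < ψ) (hψ1 : ψ ≤ 2 * Real.pi)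
    (W : Set (ℂ × ℂ))
    (hW : W = {p : ℂ × ℂ | p.2 ∈ D ∧ 0 < ‖p.1‖ ∧
      ‖p.1‖ ≤ Real.sqrt (1 - ‖p.2‖ ^ 2) * Real.tanh (ε / 2) ∧
      |Complex.arg p.1| ≤ ψ / 2}) :
    ∫⁻ p in W, ENNReal.ofReal
        (16 / (1 - ‖p.1‖ ^ 2 - ‖p.2‖ ^ 2) ^ 3) ∂volume
      = ENNReal.ofReal (ψ * (Real.cosh (ε / 2) ^ 4 - 1)) *
        ∫⁻ z in D, ENNReal.ofReal (4 / (1 - ‖z‖ ^ 2) ^ 2) ∂volume :=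
  volume_of_wedge_general D hD hD1 ε ψ hε hψ1 W hW
end

section
/- (Holonomy angle lemma, quantitative form.) Let d, d', l, ψ ∈ ℝ with 0 < d ≤ d' and 0 ≤ l ≤ s(d), where s(d) := 2·arcsinh(1/sinh(d/2)). If 1/cosh(l/2) − 2·tanh²(d/2)·cos ψ + cosh(l/2)·tanh⁴(d/2) = (1/cosh⁴(d/2))·(1/cosh(l/2))·cosh²(d'/2), then cos ψ ≤ (1 + tanh(d/2))/2. -/
/-!
With `t = tanh (d/2)` and `c = cosh (l/2)`, the bound `0 ≤ l ≤ s(d)` says exactly `c * t ≤ 1`, and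
`d ≤ d'` bounds the right-hand side of the assumed identity from below by `(1 - t²) / c`. The identity then gives
`2 cos ψ ≤ 1/c + c t²`, and this convex function of `c` is at most `1 + t` at both ends of the
admissible interval `1 ≤ c ≤ 1/t`.
-/

open Real

namespace Real

theorem tanh_pos {x : ℝ} (hx : 0 < x) : 0 < tanh x := by
  rw [tanh_eq_sinh_div_cosh]
  exact div_pos (sinh_pos_iff.2 hx) (cosh_pos x)

theorem one_sub_tanh_sq_s15 (x : ℝ) : 1 - tanh x ^ 2 = 1 / cosh x ^ 2 := by
  have := cosh_pos x
  rw [tanh_eq_sinh_div_cosh]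
  field_simp
  linarith [cosh_sq x]

theorem cosh_arsinh_one_div_sinh {x : ℝ} (hx : 0 < x) :
    cosh (arsinh (1 / sinh x)) = cosh x / sinh x := by
  have hs := sinh_pos_iff.2 hx
  have hsq : 1 + (1 / sinh x) ^ 2 = (cosh x / sinh x) ^ 2 := by
    field_simp
    linarith [cosh_sq x]
  rw [cosh_arsinh, hsq, sqrt_sq (div_pos (cosh_pos x) hs).le]

theorem cosh_mul_tanh_le_one {x y : ℝ} (hx : 0 < x) (hy₀ : 0 ≤ y)
    (hy : y ≤ arsinh (1 / sinh x)) : cosh y * tanh x ≤ 1 := by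
  have hs := sinh_pos_iff.2 hx
  have hcosh : cosh y ≤ cosh x / sinh x := by
    rw [← cosh_arsinh_one_div_sinh hx, cosh_le_cosh, abs_of_nonneg hy₀,
      abs_of_nonneg (hy₀.trans hy)]
    exact hy
  calc cosh y * tanh x ≤ cosh x / sinh x * (sinh x / cosh x) := by
        rw [← tanh_eq_sinh_div_cosh]
        exact mul_le_mul_of_nonneg_right hcosh (tanh_pos hx).le
    _ = 1 := by field_simp [(cosh_pos x).ne']

theorem one_sub_tanh_sq_le_cosh_sq_div {x y : ℝ} (hx : 0 ≤ x) (hxy : x ≤ y) :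
    1 - tanh x ^ 2 ≤ cosh y ^ 2 / cosh x ^ 4 := by
  have hcx := cosh_pos x
  have hcosh : cosh x ≤ cosh y := by
    rw [cosh_le_cosh, abs_of_nonneg hx, abs_of_nonneg (hx.trans hxy)]
    exact hxy
  calc 1 - tanh x ^ 2 = cosh x ^ 2 / cosh x ^ 4 := by
        rw [one_sub_tanh_sq_s15]
        field_simp
    _ ≤ cosh y ^ 2 / cosh x ^ 4 := by gcongr

end Real

theorem one_div_add_mul_sq_le_one_add {c t : ℝ} (ht : 0 ≤ t) (hc : 1 ≤ c) (hct : c * t ≤ 1) :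
    1 / c + c * t ^ 2 ≤ 1 + t := by
  have hc₀ : 0 < c := one_pos.trans_le hc
  have ht₁ : t ≤ 1 := by nlinarith
  rw [div_add' _ _ _ hc₀.ne', div_le_iff₀ hc₀]
  -- `t²c² - (1 + t)c + 1 = t (c - 1)(t c - 1) + (1 - t)(1 - (1 + t) c)`, and both terms are `≤ 0`.
  nlinarith [mul_nonneg ht (mul_nonneg (sub_nonneg.2 hc) (sub_nonneg.2 hct)),
    mul_nonneg (sub_nonneg.2 ht₁) (sub_nonneg.2 (show 1 ≤ (1 + t) * c by nlinarith))]

/-- The holonomy angle lemma, quantitative form. -/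
theorem holonomy_angle_lemma
    (d d' l ψ : ℝ) (hd : 0 < d) (hdd' : d ≤ d')
    (hl0 : 0 ≤ l) (hls : l ≤ 2 * Real.arsinh (1 / Real.sinh (d / 2)))
    (heq : 1 / Real.cosh (l / 2) - 2 * Real.tanh (d / 2) ^ 2 * Real.cos ψ +
        Real.cosh (l / 2) * Real.tanh (d / 2) ^ 4
      = (1 / Real.cosh (d / 2) ^ 4) * (1 / Real.cosh (l / 2)) * Real.cosh (d' / 2) ^ 2) :
    Real.cos ψ ≤ (1 + Real.tanh (d / 2)) / 2 := by
  have hd₂ : 0 < d / 2 := half_pos hd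
  have hct : cosh (l / 2) * tanh (d / 2) ≤ 1 :=
    cosh_mul_tanh_le_one hd₂ (by linarith) (by linarith)
  set t := tanh (d / 2)
  set c := cosh (l / 2)
  have hc : 1 ≤ c := one_le_cosh _
  have ht : 0 < t := tanh_pos hd₂
  have hrhs : (1 - t ^ 2) / c ≤ 1 / c - 2 * t ^ 2 * cos ψ + c * t ^ 4 := by
    rw [heq]
    calc (1 - t ^ 2) / c ≤ cosh (d' / 2) ^ 2 / cosh (d / 2) ^ 4 / c := by
          gcongr
          exact one_sub_tanh_sq_le_cosh_sq_div hd₂.le (by linarith)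
      _ = _ := by ring
  have hbound : t ^ 2 * (2 * cos ψ) ≤ t ^ 2 * (1 + t) := by
    calc t ^ 2 * (2 * cos ψ) ≤ t ^ 2 * (1 / c + c * t ^ 2) := by linear_combination hrhs
      _ ≤ t ^ 2 * (1 + t) :=
          mul_le_mul_of_nonneg_left (one_div_add_mul_sq_le_one_add ht.le hc hct) (sq_nonneg t)
  linarith [le_of_mul_le_mul_left hbound (by positivity)]
end

section
/- (Quantitative core of the tubular neighborhood theorem.) Let A > 0, d > 0, and Ψ ∈ (0, 2π]. If Ψ ≤ (A/2)·(e^d − 1) and cos Ψ ≤ (1 + tanh(d/2))/2, then d ≥ (1/2)·log(2/A + 1). -/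
open Real

/-- Quantitative core of the tubular neighborhood theorem. -/
theorem tubular_neighborhood_core
    (A d Ψ : ℝ) (hA : 0 < A) (hd : 0 < d) (hΨ0 : 0 < Ψ) (hΨ1 : Ψ ≤ 2 * Real.pi)
    (h1 : Ψ ≤ (A / 2) * (Real.exp d - 1))
    (h2 : Real.cos Ψ ≤ (1 + Real.tanh (d / 2)) / 2) :
    d ≥ (1 / 2) * Real.log (2 / A + 1) := by
  set E := Real.exp d with hE
  have hE1 : 1 < E := by
    rw [hE]; simpa using Real.exp_lt_exp.mpr hd
  have hEp : (0:ℝ) < E + 1 := by linarith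
  have hEm : (0:ℝ) < E - 1 := by linarith
  have hhalf : Real.exp (d / 2) * Real.exp (d / 2) = E := by
    rw [← Real.exp_add, hE]; ring_nf
  have hinv : Real.exp (d / 2) * Real.exp (-(d / 2)) = 1 := by
    rw [← Real.exp_add]; simp
  have htanh : Real.tanh (d / 2) = (E - 1) / (E + 1) := by
    rw [Real.tanh_eq_sinh_div_cosh, Real.sinh_eq, Real.cosh_eq]
    have h0 : (0:ℝ) < Real.exp (d / 2) := Real.exp_pos _
    have h0' : (0:ℝ) < Real.exp (-(d / 2)) := Real.exp_pos _
    rw [div_eq_div_iff (by positivity) hEp.ne']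
    linear_combination Real.exp (-(d/2)) * hhalf - Real.exp (d/2) * hinv
  -- lower bound for Ψ²
  have hcos : 1 - Ψ ^ 2 / 2 ≤ Real.cos Ψ := Real.one_sub_sq_div_two_le_cos
  have hq : (1 + (E - 1) / (E + 1)) / 2 = E / (E + 1) := by
    field_simp; ring
  have h3 : 1 - Ψ ^ 2 / 2 ≤ E / (E + 1) := by
    rw [htanh, hq] at h2; linarith
  rw [le_div_iff₀ hEp] at h3
  have hΨsq : 2 ≤ Ψ ^ 2 * (E + 1) := by nlinarith
  -- deduce 2 ≤ A (E² − 1)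
  have hsq : Ψ ^ 2 ≤ (A / 2 * (E - 1)) ^ 2 := by nlinarith
  have hA2 : 2 ≤ A * (E ^ 2 - 1) := by
    nlinarith [mul_pos (mul_pos hA hEm) hEp, sq_nonneg (A * (E - 1) * (E + 1))]
  -- conclude
  have hpos : (0:ℝ) < 2 / A + 1 := by positivity
  have hfin : 2 / A + 1 ≤ E ^ 2 := by
    rw [div_add' _ _ _ hA.ne', div_le_iff₀ hA]
    nlinarith
  calc (1:ℝ) / 2 * Real.log (2 / A + 1) ≤ 1 / 2 * Real.log (E ^ 2) := by
        gcongr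
    _ = Real.log E := by rw [Real.log_pow]; push_cast; ring
    _ = d := by rw [hE, Real.log_exp]
end

section
/- Let d > 0, d' ≥ 0, 0 ≤ l ≤ s(d) where s(d) := 2·arcsinh(1/sinh(d/2)), and let Ψ ∈ ℝ with cos Ψ ≥ 0. If cosh²(d'/2) = cosh⁴(d/2) − 2·cosh(l/2)·cosh²(d/2)·sinh²(d/2)·cos Ψ + cosh²(l/2)·sinh⁴(d/2), then cosh²(d'/2) ≤ cosh²(d) and hence d' ≤ 2d. -/
open Real

/-- First case of the lemma on two disjoint embedded complex geodesic surfaces: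
nonnegative cosine of the holonomy forces `d' ≤ 2d`. -/
theorem two_surfaces_nonneg_holonomy_case
    (d d' l Ψ : ℝ) (hd : 0 < d) (hd' : 0 ≤ d')
    (hl0 : 0 ≤ l) (hls : l ≤ 2 * Real.arsinh (1 / Real.sinh (d / 2)))
    (hΨ : 0 ≤ Real.cos Ψ)
    (heq : Real.cosh (d' / 2) ^ 2
      = Real.cosh (d / 2) ^ 4 -
          2 * Real.cosh (l / 2) * Real.cosh (d / 2) ^ 2 * Real.sinh (d / 2) ^ 2 *
            Real.cos Ψ +
          Real.cosh (l / 2) ^ 2 * Real.sinh (d / 2) ^ 4) :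
    Real.cosh (d' / 2) ^ 2 ≤ Real.cosh d ^ 2 ∧ d' ≤ 2 * d := by
  have hx : 0 < d / 2 := by linarith
  have hsx : 0 < Real.sinh (d / 2) := by rwa [Real.sinh_pos_iff]
  -- sinh (l/2) ≤ 1 / sinh (d/2)
  have hsl : Real.sinh (l / 2) ≤ 1 / Real.sinh (d / 2) := by
    have h1 : l / 2 ≤ Real.arsinh (1 / Real.sinh (d / 2)) := by linarith
    calc Real.sinh (l / 2) ≤ Real.sinh (Real.arsinh (1 / Real.sinh (d / 2))) :=
          Real.sinh_le_sinh.mpr h1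
      _ = 1 / Real.sinh (d / 2) := Real.sinh_arsinh _
  have hsl0 : 0 ≤ Real.sinh (l / 2) := by rw [Real.sinh_nonneg_iff]; linarith
  have hcl2 : Real.cosh (l / 2) ^ 2 ≤ Real.cosh (d / 2) ^ 2 / Real.sinh (d / 2) ^ 2 := by
    have h2 : Real.sinh (l / 2) ^ 2 ≤ (1 / Real.sinh (d / 2)) ^ 2 := by
      exact pow_le_pow_left₀ hsl0 hsl 2
    have hc : Real.cosh (l / 2) ^ 2 = 1 + Real.sinh (l / 2) ^ 2 := by
      have := Real.cosh_sq_sub_sinh_sq (l / 2); linarith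
    have hcd : Real.cosh (d / 2) ^ 2 = 1 + Real.sinh (d / 2) ^ 2 := by
      have := Real.cosh_sq_sub_sinh_sq (d / 2); linarith
    rw [hc, hcd]
    rw [le_div_iff₀ (by positivity)]
    have : (1 / Real.sinh (d / 2)) ^ 2 = 1 / Real.sinh (d / 2) ^ 2 := by ring
    rw [this] at h2
    have h3 : Real.sinh (l / 2) ^ 2 * Real.sinh (d / 2) ^ 2 ≤ 1 := by
      rw [div_eq_mul_inv] at h2
      calc Real.sinh (l / 2) ^ 2 * Real.sinh (d / 2) ^ 2
          ≤ 1 * (Real.sinh (d / 2) ^ 2)⁻¹ * Real.sinh (d / 2) ^ 2 :=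
            mul_le_mul_of_nonneg_right h2 (by positivity)
        _ = 1 := by field_simp
    nlinarith [sq_nonneg (Real.sinh (d/2))]
  have hterm : Real.cosh (l / 2) ^ 2 * Real.sinh (d / 2) ^ 4
      ≤ Real.cosh (d / 2) ^ 2 * Real.sinh (d / 2) ^ 2 := by
    have := mul_le_mul_of_nonneg_right hcl2 (by positivity : (0:ℝ) ≤ Real.sinh (d/2) ^ 4)
    calc Real.cosh (l / 2) ^ 2 * Real.sinh (d / 2) ^ 4
        ≤ Real.cosh (d / 2) ^ 2 / Real.sinh (d / 2) ^ 2 * Real.sinh (d / 2) ^ 4 := this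
      _ = Real.cosh (d / 2) ^ 2 * Real.sinh (d / 2) ^ 2 := by
          field_simp
  have hmid : 0 ≤ 2 * Real.cosh (l / 2) * Real.cosh (d / 2) ^ 2 * Real.sinh (d / 2) ^ 2 *
      Real.cos Ψ := by
    have := Real.cosh_pos (x := l / 2)
    positivity
  have hcoshd : Real.cosh d = Real.cosh (d / 2) ^ 2 + Real.sinh (d / 2) ^ 2 := by
    have : d = d / 2 + d / 2 := by ring
    rw [this, Real.cosh_add]; ring
  have hcd1 : 1 ≤ Real.cosh d := Real.one_le_cosh d
  have hcsq : Real.cosh (d / 2) ^ 2 ≤ Real.cosh d := by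
    have := Real.cosh_sq_sub_sinh_sq (d / 2)
    nlinarith [sq_nonneg (Real.sinh (d/2))]
  have hmain : Real.cosh (d' / 2) ^ 2 ≤ Real.cosh d ^ 2 := by
    have h4 : Real.cosh (d' / 2) ^ 2 ≤ Real.cosh (d / 2) ^ 2 * Real.cosh d := by
      rw [heq, hcoshd]; nlinarith
    calc Real.cosh (d' / 2) ^ 2 ≤ Real.cosh (d / 2) ^ 2 * Real.cosh d := h4
      _ ≤ Real.cosh d * Real.cosh d := mul_le_mul_of_nonneg_right hcsq (by linarith)
      _ = Real.cosh d ^ 2 := by ring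
  refine ⟨hmain, ?_⟩
  have h5 : Real.cosh (d' / 2) ≤ Real.cosh d := by
    have h6 : 0 < Real.cosh (d' / 2) := Real.cosh_pos (x := d' / 2)
    nlinarith [Real.cosh_pos (x := d)]
  have h7 : |d' / 2| ≤ |d| := by
    have := Real.cosh_lt_cosh (x := d) (y := d' / 2)
    by_contra hcon
    push_neg at hcon
    have : Real.cosh d < Real.cosh (d' / 2) := Real.cosh_lt_cosh.mpr hcon
    linarith
  rw [abs_of_nonneg (by linarith), abs_of_nonneg hd.le] at h7
  linarith
end
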